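/- arXiv:2601.10888 — 2 statements merged into one kernel-verified Lean document; each statement's English description precedes it below -/
import Mathlib

section
/- The cross-ratio datum T = ((1,2,3,5),(1,2,4,6),(1,3,7,8),(2,4,7,8),(3,4,5,6)) on 8 points has cross-ratio degree exactly 4: there exists a nonzero polynomial q ∈ ℂ[x₁,…,x₅] such that for every (a₁,…,a₅) ∈ (ℂ∖{0,1})⁵ with q(a₁,…,a₅) ≠ 0, the set of tuples (p₁,…,p₈) of pairwise distinct points of ℙ¹(ℂ) with p₁ = ∞, p₂ = 0, p₃ = 1 satisfying CR(p₁,p₂,p₃,p₅)=a₁, CR(p₁,p₂,p₄,p₆)=a₂, CR(p₁,p₃,p₇,p₈)=a₃, CR(p₂,p₄,p₇,p₈)=a₄, CR(p₃,p₄,p₅,p₆)=a₅ has exactly 4 elements. -/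
/-!
Normalise `p 0 = ∞`, `p 1 = 0`, `p 2 = 1`. The first three equations are linear and give
`p 4 = a₀`, `p 5 = a₁ w` and `p 7 = a₂ (u - 1) + 1` with `w = p 3`, `u = p 6`; the fifth becomes a
quadratic equation in `w` and the fourth a quadratic equation in `u` with coefficients depending
on `w`. Hence there are at most `2 · 2` solutions, and exactly four as soon as both discriminants
are nonzero and no two of the eight points collide. Each degeneracy is detected by the vanishing
of a polynomial in `a`, obtained by eliminating `w` against its quadratic with a resultant; `q` is
the product of these polynomials.
-/

open OnePoint

/-- Cross-ratio of four points of `ℙ¹(ℂ) = OnePoint ℂ`: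
`CR(z₁,z₂,z₃,z₄) = ((z₃−z₁)(z₄−z₂))/((z₃−z₂)(z₄−z₁))` when all points are finite,
extended to one point at infinity by omitting the two factors containing it. -/
noncomputable def CR : OnePoint ℂ → OnePoint ℂ → OnePoint ℂ → OnePoint ℂ → ℂ
  | Option.none,    Option.some z₂, Option.some z₃, Option.some z₄ => (z₄ - z₂) / (z₃ - z₂)
  | Option.some z₁, Option.none,    Option.some z₃, Option.some z₄ => (z₃ - z₁) / (z₄ - z₁)
  | Option.some z₁, Option.some z₂, Option.none,    Option.some z₄ => (z₄ - z₂) / (z₄ - z₁)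
  | Option.some z₁, Option.some z₂, Option.some z₃, Option.none    => (z₃ - z₁) / (z₃ - z₂)
  | Option.some z₁, Option.some z₂, Option.some z₃, Option.some z₄ =>
      ((z₃ - z₁) * (z₄ - z₂)) / ((z₃ - z₂) * (z₄ - z₁))
  | _, _, _, _ => 0

theorem CR_infty_coe (z₂ z₃ z₄ : ℂ) : CR ∞ z₂ z₃ z₄ = (z₄ - z₂) / (z₃ - z₂) := rfl

theorem CR_coe (z₁ z₂ z₃ z₄ : ℂ) :
    CR z₁ z₂ z₃ z₄ = ((z₃ - z₁) * (z₄ - z₂)) / ((z₃ - z₂) * (z₄ - z₁)) := rfl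

section Quadratic

variable {R : Type*} [CommRing R]

def quadLinResultant (A B C α β : R) : R := A * α ^ 2 - B * α * β + C * β ^ 2

theorem quadLinResultant_eq_zero {A B C α β w : R} (hq : A * (w * w) + B * w + C = 0)
    (hl : α + β * w = 0) : quadLinResultant A B C α β = 0 := by
  unfold quadLinResultant
  linear_combination β ^ 2 * hq - (A * β * w + B * β - A * α) * hl

theorem quadLinResultant_eq_zero_of_common_root {A B C D E F w : R}
    (hq : A * (w * w) + B * w + C = 0) (hd : D * (w * w) + E * w + F = 0) :
    quadLinResultant A B C (A * F - D * C) (A * E - D * B) = 0 :=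
  quadLinResultant_eq_zero hq (by linear_combination A * hd - D * hq)

theorem exists_injective_roots_of_discrim_ne_zero {K : Type*} [Field K] [IsAlgClosed K]
    [NeZero (2 : K)] {A B C : K} (hA : A ≠ 0) (hD : discrim A B C ≠ 0) :
    ∃ r : Fin 2 → K, Function.Injective r ∧
      ∀ x, A * (x * x) + B * x + C = 0 ↔ x ∈ Set.range r := by
  obtain ⟨s, hs⟩ := IsAlgClosed.exists_eq_mul_self (discrim A B C)
  have hs0 : s ≠ 0 := by rintro rfl; simp_all
  refine ⟨![(-B + s) / (2 * A), (-B - s) / (2 * A)], ?_, fun x => ?_⟩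
  · rw [injective_pair_iff_ne, Ne, div_left_inj' (mul_ne_zero two_ne_zero hA)]
    intro h
    exact hs0 ((mul_eq_zero.mp (by linear_combination h : (2 : K) * s = 0)).resolve_left
      two_ne_zero)
  · rw [quadratic_eq_zero_iff hA hs, Set.mem_range, Fin.exists_fin_two]
    simp [eq_comm]

end Quadratic

namespace CrossRatioT2

section Genericity

variable {R : Type*} [CommRing R]

def wQuadB (a : Fin 5 → R) : R := (a 0 - 1) * (a 1 - 1) - a 4 * (a 0 * a 1 + 1)

def wQuad (a : Fin 5 → R) (w : R) : R := a 1 * a 4 * (w * w) + wQuadB a * w + a 0 * a 4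

def uQuadB (a : Fin 5 → R) (w : R) : R := (1 - a 2) * (1 - a 3) - (1 - a 2 * a 3) * w

def uQuad (a : Fin 5 → R) (w u : R) : R :=
  a 2 * (1 - a 3) * (u * u) + uQuadB a w * u + a 3 * (1 - a 2) * w

def wRes (a : Fin 5 → R) (α β : R) : R := quadLinResultant (a 1 * a 4) (wQuadB a) (a 0 * a 4) α β

theorem wRes_eq_zero {a : Fin 5 → R} {w α β : R} (hw : wQuad a w = 0) (hl : α + β * w = 0) :
    wRes a α β = 0 :=
  quadLinResultant_eq_zero hw hl

def wDiscr (a : Fin 5 → R) : R := discrim (a 1 * a 4) (wQuadB a) (a 0 * a 4)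

/- `collisionij a` vanishes if points `i` and `j` of `config a w u` (defined below) can coincide:
substituting that coincidence into `uQuad a w u = 0` leaves `α + β w = 0`, up to a factor `w` or
`a 2`, and `collisionij a = wRes a α β`. -/

def collision64 (a : Fin 5 → R) : R :=
  wRes a (a 0 * (1 - a 3) * (1 - a 2 + a 0 * a 2)) (a 3 * (1 - a 2) - a 0 * (1 - a 2 * a 3))

def collision65 (a : Fin 5 → R) : R :=
  wRes a ((1 - a 2) * (a 3 + a 1 * (1 - a 3))) (a 1 * (a 1 * a 2 * (1 - a 3) - (1 - a 2 * a 3)))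

def collision74 (a : Fin 5 → R) : R :=
  wRes a (a 0 * (1 - a 3) * (a 0 + a 2 - 1)) (1 - a 0 - a 2 + a 0 * a 2 * a 3)

def collision75 (a : Fin 5 → R) : R :=
  wRes a ((1 - a 2) * (1 - a 1 * (1 - a 3))) (a 1 * (a 1 * (1 - a 3) - (1 - a 2 * a 3)))

/-- The discriminant of `uQuad a w` is `(1 - a₂a₃)² w² - 2(1 - a₂)(1 - a₃)(1 + a₂a₃) w +
((1 - a₂)(1 - a₃))²`; `uDiscrRes a` vanishes if it has a common root with `wQuad a`. -/
def uDiscrRes (a : Fin 5 → R) : R :=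
  quadLinResultant (a 1 * a 4) (wQuadB a) (a 0 * a 4)
    (a 1 * a 4 * ((1 - a 2) * (1 - a 3)) ^ 2 - (1 - a 2 * a 3) ^ 2 * (a 0 * a 4))
    (a 1 * a 4 * (-2 * (1 - a 2) * (1 - a 3) * (1 + a 2 * a 3)) - (1 - a 2 * a 3) ^ 2 * wQuadB a)

def genericity (a : Fin 5 → R) : R :=
  wDiscr a * collision64 a * collision65 a * collision74 a * collision75 a * uDiscrRes a

theorem map_genericity {S : Type*} [CommRing S] (f : R →+* S) (a : Fin 5 → R) :
    f (genericity a) = genericity (f ∘ a) := by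
  simp [genericity, wDiscr, collision64, collision65, collision74, collision75, uDiscrRes, wRes,
    quadLinResultant, wQuadB, discrim, map_ofNat]

noncomputable def genericityPoly : MvPolynomial (Fin 5) ℂ := genericity MvPolynomial.X

theorem eval_genericityPoly (a : Fin 5 → ℂ) :
    MvPolynomial.eval a genericityPoly = genericity a := by
  rw [genericityPoly, map_genericity]
  congr 1
  funext i
  exact MvPolynomial.eval_X _

theorem genericityPoly_ne_zero : genericityPoly ≠ 0 := by
  intro h
  have := eval_genericityPoly (fun _ => 2)
  rw [h, map_zero] at this
  norm_num [genericity, wDiscr, collision64, collision65, collision74, collision75, uDiscrRes,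
    wRes, quadLinResultant, wQuadB, discrim] at this

end Genericity

section Roots

variable {a : Fin 5 → ℂ} {w u : ℂ}

theorem wQuad_root_ne (ha : ∀ i, a i ≠ 0 ∧ a i ≠ 1) (hw : wQuad a w = 0) :
    w ≠ 0 ∧ w ≠ 1 ∧ w ≠ a 0 ∧ a 1 * w ≠ 0 ∧ a 1 * w ≠ 1 ∧ a 1 * w ≠ a 0 ∧ a 1 * w ≠ w := by
  have h0 i : a i ≠ 0 := (ha i).1
  have h1 i : a i ≠ 1 := (ha i).2
  have hw' := hw
  unfold wQuad wQuadB at hw'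
  have hw0 : w ≠ 0 := by
    rintro rfl
    have : a 0 * a 4 = 0 := by linear_combination hw'
    simp [h0] at this
  have hw1 : w ≠ 1 := by
    rintro rfl
    have : (a 0 - 1) * (a 1 - 1) * (a 4 - 1) = 0 := by linear_combination -hw'
    simp [sub_eq_zero, h1] at this
  refine ⟨hw0, hw1, ?_, mul_ne_zero (h0 1) hw0, ?_, ?_, ?_⟩
  · rintro rfl
    have : a 0 * (a 0 - 1) * (a 1 - 1) = 0 := by linear_combination hw'
    simp [sub_eq_zero, h0, h1] at this
  · intro h
    have hres := wRes_eq_zero hw (by linear_combination h : -1 + a 1 * w = 0)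
    unfold wRes quadLinResultant wQuadB at hres
    have : a 1 * (a 0 - 1) * (a 1 - 1) = 0 := by linear_combination hres
    simp [sub_eq_zero, h0, h1] at this
  · intro h
    have hres := wRes_eq_zero hw (by linear_combination h : -a 0 + a 1 * w = 0)
    unfold wRes quadLinResultant wQuadB at hres
    have : a 0 * a 1 * (a 0 - 1) * (a 1 - 1) * (a 4 - 1) = 0 := by linear_combination -hres
    simp [sub_eq_zero, h0, h1] at this
  · intro h
    have : (a 1 - 1) * w = 0 := by linear_combination h
    simp [sub_eq_zero, h1, hw0] at this

theorem uQuad_root_ne (ha : ∀ i, a i ≠ 0 ∧ a i ≠ 1) (hw : wQuad a w = 0)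
    (hu : uQuad a w u = 0) : u ≠ 0 ∧ u ≠ 1 ∧ u ≠ w := by
  have h0 i : a i ≠ 0 := (ha i).1
  have h1 i : a i ≠ 1 := (ha i).2
  obtain ⟨hw0, hw1, -⟩ := wQuad_root_ne ha hw
  unfold uQuad uQuadB at hu
  refine ⟨?_, ?_, ?_⟩
  · rintro rfl
    have : a 3 * (a 2 - 1) * w = 0 := by linear_combination -hu
    simp [sub_eq_zero, h0, h1, hw0] at this
  · rintro rfl
    have : (a 3 - 1) * (w - 1) = 0 := by linear_combination hu
    simp [sub_eq_zero, h1, hw1] at this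
  · rintro rfl
    have : (a 2 - 1) * u * (u - 1) = 0 := by linear_combination hu
    simp [sub_eq_zero, h1, hw0, hw1] at this

theorem uQuad_root_ne_of_collision (ha : ∀ i, a i ≠ 0 ∧ a i ≠ 1) (h64 : collision64 a ≠ 0)
    (h65 : collision65 a ≠ 0) (hw : wQuad a w = 0) (hu : uQuad a w u = 0) :
    u ≠ a 0 ∧ u ≠ a 1 * w := by
  obtain ⟨hw0, -⟩ := wQuad_root_ne ha hw
  unfold uQuad uQuadB at hu
  refine ⟨?_, ?_⟩
  · rintro rfl
    exact h64 (wRes_eq_zero hw (by linear_combination hu))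
  · rintro rfl
    have : w * ((1 - a 2) * (a 3 + a 1 * (1 - a 3)) +
        a 1 * (a 1 * a 2 * (1 - a 3) - (1 - a 2 * a 3)) * w) = 0 := by linear_combination hu
    exact h65 (wRes_eq_zero hw ((mul_eq_zero.mp this).resolve_left hw0))

theorem uQuad_root_affine_ne (ha : ∀ i, a i ≠ 0 ∧ a i ≠ 1) (hw : wQuad a w = 0)
    (hu : uQuad a w u = 0) :
    a 2 * (u - 1) + 1 ≠ 0 ∧ a 2 * (u - 1) + 1 ≠ 1 ∧ a 2 * (u - 1) + 1 ≠ w ∧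
      a 2 * (u - 1) + 1 ≠ u := by
  have h0 i : a i ≠ 0 := (ha i).1
  have h1 i : a i ≠ 1 := (ha i).2
  obtain ⟨hw0, -⟩ := wQuad_root_ne ha hw
  obtain ⟨hu0, hu1, huw⟩ := uQuad_root_ne ha hw hu
  unfold uQuad uQuadB at hu
  refine ⟨?_, ?_, ?_, ?_⟩
  · intro h
    have : u * w = 0 := by linear_combination -hu + (u - a 3 * (u - w)) * h
    simp [hu0, hw0] at this
  · intro h
    have : a 2 * (u - 1) = 0 := by linear_combination h
    simp [sub_eq_zero, h0, hu1] at this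
  · intro h
    have : a 3 * w * (u - w) = 0 := by linear_combination -hu + (u - a 3 * (u - w)) * h
    simp [sub_eq_zero, h0, hw0, huw] at this
  · intro h
    have : (a 2 - 1) * (u - 1) = 0 := by linear_combination h
    simp [sub_eq_zero, h1, hu1] at this

theorem uQuad_root_affine_ne_of_collision (ha : ∀ i, a i ≠ 0 ∧ a i ≠ 1)
    (h74 : collision74 a ≠ 0) (h75 : collision75 a ≠ 0) (hw : wQuad a w = 0)
    (hu : uQuad a w u = 0) : a 2 * (u - 1) + 1 ≠ a 0 ∧ a 2 * (u - 1) + 1 ≠ a 1 * w := by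
  obtain ⟨hw0, -⟩ := wQuad_root_ne ha hw
  unfold uQuad uQuadB at hu
  refine ⟨fun h => h74 (wRes_eq_zero hw ?_), fun h => ?_⟩
  · linear_combination a 2 * hu - ((1 - a 3) * (a 2 * u + a 0 - 1 + a 2) +
      (1 - a 2) * (1 - a 3) - (1 - a 2 * a 3) * w) * h
  · have : w * ((1 - a 2) * (1 - a 1 * (1 - a 3)) +
        a 1 * (a 1 * (1 - a 3) - (1 - a 2 * a 3)) * w) = 0 := by
      linear_combination a 2 * hu - ((1 - a 3) * (a 2 * u + a 1 * w - 1 + a 2) +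
        (1 - a 2) * (1 - a 3) - (1 - a 2 * a 3) * w) * h
    exact h75 (wRes_eq_zero hw ((mul_eq_zero.mp this).resolve_left hw0))

theorem uQuad_discrim_ne_zero (h : uDiscrRes a ≠ 0) (hw : wQuad a w = 0) :
    discrim (a 2 * (1 - a 3)) (uQuadB a w) (a 3 * (1 - a 2) * w) ≠ 0 := by
  intro hd
  refine h (quadLinResultant_eq_zero_of_common_root hw (w := w) ?_)
  unfold discrim uQuadB at hd
  linear_combination hd

end Roots

noncomputable def config (a : Fin 5 → ℂ) (w u : ℂ) : Fin 8 → OnePoint ℂ :=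
  ![∞, ↑(0 : ℂ), ↑(1 : ℂ), ↑w, ↑(a 0), ↑(a 1 * w), ↑u, ↑(a 2 * (u - 1) + 1)]

def solutions (a : Fin 5 → ℂ) : Set (Fin 8 → OnePoint ℂ) :=
  {p | Function.Injective p ∧ p 0 = ∞ ∧ p 1 = ((0 : ℂ) : OnePoint ℂ) ∧
    p 2 = ((1 : ℂ) : OnePoint ℂ) ∧
    CR (p 0) (p 1) (p 2) (p 4) = a 0 ∧
    CR (p 0) (p 1) (p 3) (p 5) = a 1 ∧
    CR (p 0) (p 2) (p 6) (p 7) = a 2 ∧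
    CR (p 1) (p 3) (p 6) (p 7) = a 3 ∧
    CR (p 2) (p 3) (p 4) (p 5) = a 4}

section Solutions

variable {a : Fin 5 → ℂ} {w u : ℂ}

theorem injective_config (ha : ∀ i, a i ≠ 0 ∧ a i ≠ 1) (h64 : collision64 a ≠ 0)
    (h65 : collision65 a ≠ 0) (h74 : collision74 a ≠ 0) (h75 : collision75 a ≠ 0)
    (hw : wQuad a w = 0) (hu : uQuad a w u = 0) : Function.Injective (config a w u) := by
  have := ha 0
  have := wQuad_root_ne ha hw
  have := uQuad_root_ne ha hw hu
  have := uQuad_root_ne_of_collision ha h64 h65 hw hu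
  have := uQuad_root_affine_ne ha hw hu
  have := uQuad_root_affine_ne_of_collision ha h74 h75 hw hu
  rw [← List.nodup_ofFn]
  simp only [config, List.ofFn_succ, List.ofFn_zero, Matrix.cons_val_zero, Matrix.cons_val_succ,
    List.nodup_cons, List.mem_cons, List.not_mem_nil, OnePoint.coe_eq_coe, OnePoint.infty_ne_coe]
  grind

theorem config_mem_solutions (ha : ∀ i, a i ≠ 0 ∧ a i ≠ 1) (h64 : collision64 a ≠ 0)
    (h65 : collision65 a ≠ 0) (h74 : collision74 a ≠ 0) (h75 : collision75 a ≠ 0)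
    (hw : wQuad a w = 0) (hu : uQuad a w u = 0) : config a w u ∈ solutions a := by
  obtain ⟨hw0, -, hwa0, -, ha1w1, -⟩ := wQuad_root_ne ha hw
  obtain ⟨-, hu1, huw⟩ := uQuad_root_ne ha hw hu
  obtain ⟨hv0, -⟩ := uQuad_root_affine_ne ha hw hu
  refine ⟨injective_config ha h64 h65 h74 h75 hw hu, rfl, rfl, rfl, ?_, ?_, ?_, ?_, ?_⟩
  · simp [config, CR_infty_coe]
  · simp [config, CR_infty_coe, hw0]
  · change CR ∞ ↑(1 : ℂ) ↑u ↑(a 2 * (u - 1) + 1) = a 2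
    rw [CR_infty_coe, div_eq_iff (sub_ne_zero.mpr hu1)]
    ring
  · change CR ↑(0 : ℂ) ↑w ↑u ↑(a 2 * (u - 1) + 1) = a 3
    rw [CR_coe, div_eq_iff (mul_ne_zero (sub_ne_zero.mpr huw) (by simpa using hv0))]
    unfold uQuad uQuadB at hu
    linear_combination hu
  · change CR ↑(1 : ℂ) ↑w ↑(a 0) ↑(a 1 * w) = a 4
    rw [CR_coe, div_eq_iff (mul_ne_zero (sub_ne_zero.mpr hwa0.symm) (sub_ne_zero.mpr ha1w1))]
    unfold wQuad wQuadB at hw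
    linear_combination hw

theorem exists_config_eq_of_mem_solutions {p : Fin 8 → OnePoint ℂ} (hp : p ∈ solutions a) :
    ∃ w u, wQuad a w = 0 ∧ uQuad a w u = 0 ∧ config a w u = p := by
  obtain ⟨hinj, h0, h1, h2, e0, e1, e2, e3, e4⟩ := hp
  have hfin (i : Fin 8) (hi : i ≠ 0) : ∃ z : ℂ, p i = z := by
    cases hpi : p i with
    | infty => exact absurd (hinj (hpi.trans h0.symm)) hi
    | coe z => exact ⟨z, rfl⟩
  have hne {i j : Fin 8} {z z' : ℂ} (hi : p i = z) (hj : p j = z') (hij : i ≠ j) : z ≠ z' :=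
    fun h => hij (hinj (by rw [hi, hj, h]))
  obtain ⟨w, h3⟩ := hfin 3 (by decide)
  obtain ⟨x, h4⟩ := hfin 4 (by decide)
  obtain ⟨y, h5⟩ := hfin 5 (by decide)
  obtain ⟨u, h6⟩ := hfin 6 (by decide)
  obtain ⟨v, h7⟩ := hfin 7 (by decide)
  rw [h0, h1, h2, h4, CR_infty_coe] at e0
  rw [h0, h1, h3, h5, CR_infty_coe, div_eq_iff (by simpa using hne h3 h1 (by decide))] at e1
  rw [h0, h2, h6, h7, CR_infty_coe, div_eq_iff (sub_ne_zero.mpr (hne h6 h2 (by decide)))] at e2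
  rw [h1, h3, h6, h7, CR_coe, div_eq_iff (mul_ne_zero (sub_ne_zero.mpr (hne h6 h3 (by decide)))
    (by simpa using hne h7 h1 (by decide)))] at e3
  rw [h2, h3, h4, h5, CR_coe, div_eq_iff (mul_ne_zero (sub_ne_zero.mpr (hne h4 h3 (by decide)))
    (sub_ne_zero.mpr (hne h5 h2 (by decide))))] at e4
  simp only [sub_zero, div_one] at e0 e1
  subst e0 e1
  obtain rfl : v = a 2 * (u - 1) + 1 := by linear_combination e2
  refine ⟨w, u, by unfold wQuad wQuadB; linear_combination e4,
    by unfold uQuad uQuadB; linear_combination e3, ?_⟩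
  funext i
  fin_cases i <;> simp [config, *]

theorem solutions_eq_range (ha : ∀ i, a i ≠ 0 ∧ a i ≠ 1) (hg : genericity a ≠ 0) :
    ∃ f : Fin 2 × Fin 2 → Fin 8 → OnePoint ℂ,
      Function.Injective f ∧ solutions a = Set.range f := by
  obtain ⟨⟨⟨⟨⟨hD, h64⟩, h65⟩, h74⟩, h75⟩, hU⟩ := by
    simpa only [genericity, mul_ne_zero_iff] using hg
  obtain ⟨w, hw_inj, hw_roots⟩ :=
    exists_injective_roots_of_discrim_ne_zero (mul_ne_zero (ha 1).1 (ha 4).1) hD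
  have hA : a 2 * (1 - a 3) ≠ 0 := mul_ne_zero (ha 2).1 (sub_ne_zero.mpr (ha 3).2.symm)
  choose u hu_inj hu_roots using fun i => exists_injective_roots_of_discrim_ne_zero hA
    (uQuad_discrim_ne_zero hU ((hw_roots (w i)).2 ⟨i, rfl⟩))
  refine ⟨fun ij => config a (w ij.1) (u ij.1 ij.2), ?_, ?_⟩
  · rintro ⟨i, j⟩ ⟨i', j'⟩ h
    obtain rfl : i = i' := hw_inj (OnePoint.coe_injective (congrFun h 3))
    obtain rfl : j = j' := hu_inj i (OnePoint.coe_injective (congrFun h 6))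
    rfl
  · ext p
    constructor
    · intro hp
      obtain ⟨x, y, hx, hy, rfl⟩ := exists_config_eq_of_mem_solutions hp
      obtain ⟨i, rfl⟩ := (hw_roots x).1 hx
      obtain ⟨j, rfl⟩ := (hu_roots i y).1 hy
      exact ⟨(i, j), rfl⟩
    · rintro ⟨⟨i, j⟩, rfl⟩
      exact config_mem_solutions ha h64 h65 h74 h75 ((hw_roots _).2 ⟨i, rfl⟩)
        ((hu_roots i _).2 ⟨j, rfl⟩)

end Solutions

end CrossRatioT2

open CrossRatioT2

theorem crossRatioDegree_eq_four_T2 :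
    ∃ q : MvPolynomial (Fin 5) ℂ, q ≠ 0 ∧
      ∀ a : Fin 5 → ℂ, (∀ i, a i ≠ 0 ∧ a i ≠ 1) → MvPolynomial.eval a q ≠ 0 →
        let S : Set (Fin 8 → OnePoint ℂ) :=
          {p | Function.Injective p ∧ p 0 = ∞ ∧ p 1 = ((0 : ℂ) : OnePoint ℂ) ∧
            p 2 = ((1 : ℂ) : OnePoint ℂ) ∧
            CR (p 0) (p 1) (p 2) (p 4) = a 0 ∧
            CR (p 0) (p 1) (p 3) (p 5) = a 1 ∧
            CR (p 0) (p 2) (p 6) (p 7) = a 2 ∧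
            CR (p 1) (p 3) (p 6) (p 7) = a 3 ∧
            CR (p 2) (p 3) (p 4) (p 5) = a 4}
        S.Finite ∧ S.ncard = 4 := by
  refine ⟨genericityPoly, genericityPoly_ne_zero, fun a ha hq => ?_⟩
  rw [eval_genericityPoly] at hq
  obtain ⟨f, hf, hS⟩ := solutions_eq_range ha hq
  show (solutions a).Finite ∧ (solutions a).ncard = 4
  rw [hS, Set.ncard_range_of_injective hf]
  exact ⟨Set.finite_range f, by simp⟩
end

section
/- The cross-ratio datum T = ((1,2,3,5),(1,2,4,6),(1,2,7,8),(3,4,5,7),(3,4,6,8)) on 8 points has cross-ratio degree exactly 3: there exists a nonzero polynomial q ∈ ℂ[x₁,…,x₅] such that for every (a₁,…,a₅) ∈ (ℂ∖{0,1})⁵ with q(a₁,…,a₅) ≠ 0, the set of tuples (p₁,…,p₈) of pairwise distinct points of ℙ¹(ℂ) with p₁ = ∞, p₂ = 0, p₃ = 1 satisfying CR(p₁,p₂,p₃,p₅)=a₁, CR(p₁,p₂,p₄,p₆)=a₂, CR(p₁,p₂,p₇,p₈)=a₃, CR(p₃,p₄,p₅,p₇)=a₄, CR(p₃,p₄,p₆,p₈)=a₅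 has exactly 3 elements. -/
/-!
Normalise `p 0 = ∞`, `p 1 = 0`, `p 2 = 1` and write `x = p 3`. The first three cross-ratio
equations say `p 4 = a 0`, `p 5 = a 1 * x` and `p 7 = a 2 * p 6`; the fourth is linear in `p 6`
and gives `p 6 = uNum a x / uDen a x`; the fifth then becomes a cubic equation in `x`. So the
solutions are parametrised injectively by the roots of this cubic. For generic `a` the cubic has
three simple roots (its discriminant does not vanish), and no root makes `uDen` vanish or two of
the eight points collide: every such coincidence is an equation `B x = 0` with `B` of degree at
most 2, which is excluded as soon as the resultant of the cubic and `B` does not vanish. The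
product of the discriminant and of these resultants is a polynomial in `a`, and it is not the
zero polynomial because it does not vanish at `a = (6, 20, 4, 10, 5)`.
-/

open OnePoint

namespace Cubic

variable {R : Type*} [CommRing R]

/-- The Sylvester resultant of `P` and `b₂ X² + b₁ X + b₀` in formal degrees 3 and 2, so it
still detects common roots when `b₂ = 0`. -/
def resultantQuadratic (P : Cubic R) (b₂ b₁ b₀ : R) : R :=
  P.a ^ 2 * b₀ ^ 3 - P.b * P.a * b₀ ^ 2 * b₁ + P.b ^ 2 * b₀ ^ 2 * b₂ + P.c * P.a * b₀ * b₁ ^ 2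
    - 2 * P.c * P.a * b₀ ^ 2 * b₂ - P.c * P.b * b₀ * b₁ * b₂ + P.c ^ 2 * b₀ * b₂ ^ 2
    - P.d * P.a * b₁ ^ 3 + 3 * P.d * P.a * b₀ * b₁ * b₂ + P.d * P.b * b₁ ^ 2 * b₂
    - 2 * P.d * P.b * b₀ * b₂ ^ 2 - P.d * P.c * b₁ * b₂ ^ 2 + P.d ^ 2 * b₂ ^ 3

theorem eval_toPoly (P : Cubic R) (x : R) :
    P.toPoly.eval x = P.a * x ^ 3 + P.b * x ^ 2 + P.c * x + P.d := by
  simp [toPoly]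

theorem quadratic_ne_zero_of_resultantQuadratic_ne_zero {P : Cubic R} {b₂ b₁ b₀ x : R}
    (hres : P.resultantQuadratic b₂ b₁ b₀ ≠ 0) (hP : P.toPoly.eval x = 0) :
    b₂ * x ^ 2 + b₁ * x + b₀ ≠ 0 := by
  intro hB
  rw [eval_toPoly] at hP
  refine hres ?_
  unfold resultantQuadratic
  -- the coefficients are cofactors of the Sylvester matrix
  linear_combination
    (-(P.a*b₁^2*b₂)*x - P.a*b₁^3 + P.a*b₀*b₂^2*x + 2*P.a*b₀*b₁*b₂ + P.b*b₁*b₂^2*x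
      + P.b*b₁^2*b₂ - P.b*b₀*b₂^2 - P.c*b₂^3*x - P.c*b₁*b₂^2 + P.d*b₂^3) * hP +
    (P.a^2*b₁^2*x^2 - P.a^2*b₀*b₂*x^2 - P.a^2*b₀*b₁*x + P.a^2*b₀^2
      - P.b*P.a*b₁*b₂*x^2 + P.b*P.a*b₁^2*x - P.b*P.a*b₀*b₁ - P.b^2*b₁*b₂*x
      + P.b^2*b₀*b₂ + P.c*P.a*b₂^2*x^2 + P.c*P.a*b₁^2 - 2*P.c*P.a*b₀*b₂ + P.c*P.b*b₂^2*x
      - P.c*P.b*b₁*b₂ + P.c^2*b₂^2 - P.d*P.a*b₂^2*x + P.d*P.a*b₁*b₂ - P.d*P.b*b₂^2) * hB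

theorem ncard_setOf_eval_eq_zero {F : Type*} [Field F] [IsAlgClosed F] {P : Cubic F}
    (ha : P.a ≠ 0) (hd : P.discr ≠ 0) : {x | P.toPoly.eval x = 0}.ncard = 3 := by
  classical
  have hroots : {x | P.toPoly.eval x = 0} = ↑P.roots.toFinset := by
    ext x
    simp [roots, Polynomial.mem_roots (ne_zero_of_a_ne_zero ha)]
  rw [hroots, Set.ncard_coe_finset]
  exact card_roots_of_discr_ne_zero (φ := RingHom.id F) ha (IsAlgClosed.splits _) hd

end Cubic

section Elimination

variable {R : Type*} [CommRing R] (a : Fin 5 → R)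

def uNum (x : R) : R := (a 0 - 1 + a 3) * x - a 3 * a 0

def uDen (x : R) : R := a 3 * x + (a 0 - 1 - a 3 * a 0)

def eliminationCubic : Cubic R where
  a := -(a 1 * a 3)
  b := a 3 + a 1 - a 3 * a 4 - a 2 * a 4 + a 2 * a 3 * a 4 + a 1 * a 3 * a 4 - a 1 * a 2
    + a 1 * a 2 * a 4 + a 1 * a 2 * a 3 - a 1 * a 2 * a 3 * a 4 + a 0 * a 2 * a 4 - a 0 * a 1
    + a 0 * a 1 * a 3 + a 0 * a 1 * a 2 - a 0 * a 1 * a 2 * a 4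
  c := a 0 - 1 + a 2 + a 4 - a 2 * a 3 - a 1 * a 4 - a 0 * a 4 - a 0 * a 3 + a 0 * a 3 * a 4
    - a 0 * a 2 - a 0 * a 2 * a 3 * a 4 + a 0 * a 1 * a 4 - a 0 * a 1 * a 3 * a 4
    - a 0 * a 1 * a 2 * a 3 + a 0 * a 1 * a 2 * a 3 * a 4
  d := a 0 * a 2 * a 3

theorem eval_eliminationCubic (x : R) :
    (eliminationCubic a).toPoly.eval x = (a 1 * x - 1) * (a 2 * uNum a x - x * uDen a x)
      - a 4 * (a 1 - 1) * x * (a 2 * uNum a x - uDen a x) := by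
  rw [Cubic.eval_toPoly]
  simp only [eliminationCubic, uNum, uDen]
  ring

theorem eval_eliminationCubic_zero : (eliminationCubic a).toPoly.eval 0 = a 0 * a 2 * a 3 := by
  rw [eval_eliminationCubic]
  simp only [uNum, uDen]
  ring

theorem eval_eliminationCubic_one : (eliminationCubic a).toPoly.eval 1 = ∏ i, (a i - 1) := by
  rw [eval_eliminationCubic, Fin.prod_univ_five]
  simp only [uNum, uDen]
  ring

/-- The resultants of the elimination cubic with the polynomials whose vanishing at a root makes
the configuration degenerate; these polynomials are listed in `nondegenerate_of_genericity`. -/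
def degeneracyResultants : R :=
  let P := eliminationCubic a
  P.resultantQuadratic 0 (a 3) (a 0 - 1 - a 3 * a 0)
    * P.resultantQuadratic 0 (a 0 - 1 + a 3) (-(a 3 * a 0))
    * P.resultantQuadratic 0 1 (-a 0)
    * P.resultantQuadratic 0 (a 1) (-1)
    * P.resultantQuadratic 0 (a 1) (-a 0)
    * P.resultantQuadratic 0 (a 2 * (a 0 - 1 + a 3) - a 0 * a 3)
        (-(a 2 * a 3 * a 0) - a 0 * (a 0 - 1 - a 3 * a 0))
    * P.resultantQuadratic (-(a 1 * a 3)) (a 0 - 1 + a 3 - a 1 * (a 0 - 1 - a 3 * a 0))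
        (-(a 3 * a 0))
    * P.resultantQuadratic (-(a 1 * a 3)) (a 2 * (a 0 - 1 + a 3) - a 1 * (a 0 - 1 - a 3 * a 0))
        (-(a 2 * a 3 * a 0))

def genericity : R := (eliminationCubic a).discr * degeneracyResultants a

theorem map_genericity {S : Type*} [CommRing S] (f : R →+* S) :
    f (genericity a) = genericity (f ∘ a) := by
  simp only [genericity, degeneracyResultants, eliminationCubic, Cubic.discr,
    Cubic.resultantQuadratic, map_mul, map_add, map_sub, map_neg, map_pow, map_ofNat, map_one,
    map_zero, Function.comp_apply]

open MvPolynomial in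
theorem eval_genericity_X : eval a (genericity (X : Fin 5 → MvPolynomial (Fin 5) R)) =
    genericity a := by
  rw [map_genericity, show eval a ∘ X = a from funext fun i => eval_X i]

variable {a} {x u : R}

theorem mul_uDen_eq_uNum_iff :
    (a 0 - 1) * (u - x) = a 3 * ((a 0 - x) * (u - 1)) ↔ u * uDen a x = uNum a x := by
  unfold uDen uNum
  constructor <;> intro h <;> linear_combination h

theorem discr_ne_zero_of_genericity (hgen : genericity a ≠ 0) :
    (eliminationCubic a).discr ≠ 0 :=
  left_ne_zero_of_mul hgen

variable [IsDomain R]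

theorem uDen_ne_zero (ha₀ : a 0 ≠ 1) (hx : x ≠ 1) (hu : u * uDen a x = uNum a x) :
    uDen a x ≠ 0 := by
  intro hD
  refine mul_ne_zero (sub_ne_zero.mpr ha₀) (sub_ne_zero.mpr hx) ?_
  simp only [uDen, uNum] at hD hu
  linear_combination (u - 1) * hD - hu

theorem eval_eliminationCubic_eq_zero_iff (hD : uDen a x ≠ 0) (hu : u * uDen a x = uNum a x) :
    (a 1 * x - 1) * (a 2 * u - x) = a 4 * ((a 1 * x - x) * (a 2 * u - 1)) ↔
      (eliminationCubic a).toPoly.eval x = 0 := by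
  rw [eval_eliminationCubic]
  constructor
  · intro h
    linear_combination uDen a x * h - a 2 * (a 1 * x - 1 - a 4 * (a 1 - 1) * x) * hu
  · intro h
    refine mul_left_cancel₀ hD ?_
    linear_combination h + a 2 * (a 1 * x - 1 - a 4 * (a 1 - 1) * x) * hu

theorem nondegenerate_of_genericity (hgen : genericity a ≠ 0)
    (hx : (eliminationCubic a).toPoly.eval x = 0) :
    uDen a x ≠ 0 ∧ uNum a x ≠ 0 ∧ x ≠ a 0 ∧ a 1 * x ≠ 1 ∧ a 1 * x ≠ a 0 ∧
      a 2 * uNum a x ≠ a 0 * uDen a x ∧ uNum a x ≠ a 1 * x * uDen a x ∧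
      a 2 * uNum a x ≠ a 1 * x * uDen a x := by
  have hres := right_ne_zero_of_mul hgen
  simp only [degeneracyResultants, mul_ne_zero_iff] at hres
  obtain ⟨⟨⟨⟨⟨⟨⟨h₁, h₂⟩, h₃⟩, h₄⟩, h₅⟩, h₆⟩, h₇⟩, h₈⟩ := hres
  have key {b₂ b₁ b₀ : R} (h : (eliminationCubic a).resultantQuadratic b₂ b₁ b₀ ≠ 0) :=
    Cubic.quadratic_ne_zero_of_resultantQuadratic_ne_zero h hx
  unfold uDen uNum
  refine ⟨fun h => key h₁ ?_, fun h => key h₂ ?_, fun h => key h₃ ?_, fun h => key h₄ ?_,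
    fun h => key h₅ ?_, fun h => key h₆ ?_, fun h => key h₇ ?_, fun h => key h₈ ?_⟩ <;>
  linear_combination h

theorem ne_zero_of_eval_eliminationCubic_eq_zero (ha : ∀ i, a i ≠ 0 ∧ a i ≠ 1)
    (hx : (eliminationCubic a).toPoly.eval x = 0) : x ≠ 0 := by
  rintro rfl
  exact mul_ne_zero (mul_ne_zero (ha 0).1 (ha 2).1) (ha 3).1 (eval_eliminationCubic_zero a ▸ hx)

theorem ne_one_of_eval_eliminationCubic_eq_zero (ha : ∀ i, a i ≠ 0 ∧ a i ≠ 1)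
    (hx : (eliminationCubic a).toPoly.eval x = 0) : x ≠ 1 := by
  rintro rfl
  exact Finset.prod_ne_zero_iff.mpr (fun i _ => sub_ne_zero.mpr (ha i).2)
    (eval_eliminationCubic_one a ▸ hx)

theorem u_ne_of_genericity (ha : ∀ i, a i ≠ 0 ∧ a i ≠ 1) (hgen : genericity a ≠ 0)
    (hx : (eliminationCubic a).toPoly.eval x = 0) (hu : u * uDen a x = uNum a x) :
    u ≠ 0 ∧ u ≠ 1 ∧ u ≠ x ∧ u ≠ a 0 ∧ u ≠ a 1 * x := by
  obtain ⟨-, hN, hxa₀, -, -, -, hNa₁x, -⟩ := nondegenerate_of_genericity hgen hx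
  have hx₁ := ne_one_of_eval_eliminationCubic_eq_zero ha hx
  have hu_ne {w : R} (h : uNum a x ≠ w * uDen a x) : u ≠ w := fun hw => h (hw ▸ hu.symm)
  refine ⟨hu_ne (by simpa using hN), hu_ne fun h => ?_, hu_ne fun h => ?_, hu_ne fun h => ?_,
    hu_ne hNa₁x⟩ <;> simp only [uNum, uDen] at h
  · exact mul_ne_zero (sub_ne_zero.mpr (ha 0).2) (sub_ne_zero.mpr hx₁) (by linear_combination h)
  · exact mul_ne_zero (mul_ne_zero (ha 3).1 (sub_ne_zero.mpr hx₁)) (sub_ne_zero.mpr hxa₀)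
      (by linear_combination -h)
  · exact mul_ne_zero (mul_ne_zero (sub_ne_zero.mpr (ha 0).2) (sub_ne_zero.mpr (ha 3).2.symm))
      (sub_ne_zero.mpr hxa₀) (by linear_combination h)

theorem a₂_mul_u_ne_of_genericity (ha : ∀ i, a i ≠ 0 ∧ a i ≠ 1) (hgen : genericity a ≠ 0)
    (hx : (eliminationCubic a).toPoly.eval x = 0) (hu : u * uDen a x = uNum a x) :
    a 2 * u ≠ 0 ∧ a 2 * u ≠ 1 ∧ a 2 * u ≠ x ∧ a 2 * u ≠ a 0 ∧ a 2 * u ≠ a 1 * x ∧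
      a 2 * u ≠ u := by
  obtain ⟨hD, -, -, ha₁x, -, ha₂Na₀, -, ha₂Na₁x⟩ := nondegenerate_of_genericity hgen hx
  have hx₀ := ne_zero_of_eval_eliminationCubic_eq_zero ha hx
  have hx₁ := ne_one_of_eval_eliminationCubic_eq_zero ha hx
  have hu₀ := (u_ne_of_genericity ha hgen hx hu).1
  have hP := hx
  rw [eval_eliminationCubic] at hP
  have hv_ne {w : R} (h : a 2 * uNum a x ≠ w * uDen a x) : a 2 * u ≠ w :=
    fun hw => h (by rw [← hu, ← hw]; ring)
  refine ⟨mul_ne_zero (ha 2).1 hu₀, hv_ne fun h => ?_, hv_ne fun h => ?_, hv_ne ha₂Na₀,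
    hv_ne ha₂Na₁x, fun h => mul_ne_zero hu₀ (sub_ne_zero.mpr (ha 2).2) (by linear_combination h)⟩
  · refine mul_ne_zero (mul_ne_zero (sub_ne_zero.mpr ha₁x) hD) (sub_ne_zero.mpr hx₁.symm) ?_
    linear_combination hP - (a 1 * x - 1 - a 4 * (a 1 - 1) * x) * h
  · refine mul_ne_zero (mul_ne_zero (mul_ne_zero (mul_ne_zero (ha 4).1
      (sub_ne_zero.mpr (ha 1).2)) hx₀) (sub_ne_zero.mpr hx₁)) hD ?_
    linear_combination -hP + (a 1 * x - 1 - a 4 * (a 1 - 1) * x) * h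

theorem injective_of_genericity (ha : ∀ i, a i ≠ 0 ∧ a i ≠ 1) (hgen : genericity a ≠ 0)
    (hx : (eliminationCubic a).toPoly.eval x = 0) (hu : u * uDen a x = uNum a x) :
    Function.Injective ![0, 1, x, a 0, a 1 * x, u, a 2 * u] := by
  obtain ⟨-, -, hxa₀, ha₁x, ha₁xa₀, -⟩ := nondegenerate_of_genericity hgen hx
  have hx₀ := ne_zero_of_eval_eliminationCubic_eq_zero ha hx
  have hx₁ := ne_one_of_eval_eliminationCubic_eq_zero ha hx
  obtain ⟨hu₀, hu₁, hux, hua₀, hua₁x⟩ := u_ne_of_genericity ha hgen hx hu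
  obtain ⟨hv₀, hv₁, hvx, hva₀, hva₁x, hvu⟩ := a₂_mul_u_ne_of_genericity ha hgen hx hu
  have ha₁x₀ : a 1 * x ≠ 0 := mul_ne_zero (ha 1).1 hx₀
  have ha₁xx : a 1 * x ≠ x := fun h => mul_ne_zero hx₀ (sub_ne_zero.mpr (ha 1).2)
    (by linear_combination h)
  rw [← List.nodup_ofFn]
  show [0, 1, x, a 0, a 1 * x, u, a 2 * u].Nodup
  simp only [List.nodup_cons, List.mem_cons, List.not_mem_nil, not_or, List.nodup_nil,
    not_false_eq_true, and_true, or_false]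
  exact ⟨⟨zero_ne_one, hx₀.symm, (ha 0).1.symm, ha₁x₀.symm, hu₀.symm, hv₀.symm⟩,
    ⟨hx₁.symm, (ha 0).2.symm, ha₁x.symm, hu₁.symm, hv₁.symm⟩,
    ⟨hxa₀, ha₁xx.symm, hux.symm, hvx.symm⟩, ⟨ha₁xa₀.symm, hua₀.symm, hva₀.symm⟩,
    ⟨hua₁x.symm, hva₁x.symm⟩, hvu.symm⟩

end Elimination

open MvPolynomial in
theorem genericity_X_ne_zero {K : Type*} [Field K] [CharZero K] :
    genericity (X : Fin 5 → MvPolynomial (Fin 5) K) ≠ 0 := by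
  intro h
  have := eval_genericity_X (![6, 20, 4, 10, 5] : Fin 5 → K)
  rw [h, map_zero] at this
  simp only [genericity, degeneracyResultants, eliminationCubic, Cubic.discr,
    Cubic.resultantQuadratic, Matrix.cons_val] at this
  norm_num at this

theorem CR_infty_coe_eq_iff {z₂ z₃ z₄ t : ℂ} (h : z₃ ≠ z₂) :
    CR ∞ z₂ z₃ z₄ = t ↔ z₄ - z₂ = t * (z₃ - z₂) :=
  div_eq_iff (sub_ne_zero.mpr h)

theorem CR_coe_eq_iff {z₁ z₂ z₃ z₄ t : ℂ} (h₃₂ : z₃ ≠ z₂) (h₄₁ : z₄ ≠ z₁) :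
    CR z₁ z₂ z₃ z₄ = t ↔ (z₃ - z₁) * (z₄ - z₂) = t * ((z₃ - z₂) * (z₄ - z₁)) :=
  div_eq_iff (mul_ne_zero (sub_ne_zero.mpr h₃₂) (sub_ne_zero.mpr h₄₁))

theorem OnePoint.injective_cons_infty_iff {X : Type*} {n : ℕ} (w : Fin n → X) :
    Function.Injective (Fin.cons ∞ ((↑) ∘ w) : Fin (n + 1) → OnePoint X) ↔
      Function.Injective w := by
  simp [Fin.cons_injective_iff, OnePoint.coe_injective.of_comp_iff]

def IsSolution (a : Fin 5 → ℂ) (p : Fin 8 → OnePoint ℂ) : Prop :=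
  Function.Injective p ∧ p 0 = ∞ ∧ p 1 = ((0 : ℂ) : OnePoint ℂ) ∧
    p 2 = ((1 : ℂ) : OnePoint ℂ) ∧
    CR (p 0) (p 1) (p 2) (p 4) = a 0 ∧
    CR (p 0) (p 1) (p 3) (p 5) = a 1 ∧
    CR (p 0) (p 1) (p 6) (p 7) = a 2 ∧
    CR (p 2) (p 3) (p 4) (p 6) = a 3 ∧
    CR (p 2) (p 3) (p 5) (p 7) = a 4

def normalizedConfig (x y z u v : ℂ) : Fin 8 → OnePoint ℂ :=
  ![∞, ↑(0 : ℂ), ↑(1 : ℂ), ↑x, ↑y, ↑z, ↑u, ↑v]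

theorem exists_eq_normalizedConfig {p : Fin 8 → OnePoint ℂ} (hp : Function.Injective p)
    (h₀ : p 0 = ∞) (h₁ : p 1 = ((0 : ℂ) : OnePoint ℂ)) (h₂ : p 2 = ((1 : ℂ) : OnePoint ℂ)) :
    ∃ x y z u v, p = normalizedConfig x y z u v := by
  have hfin (i : Fin 8) (hi : i ≠ 0) : ∃ w : ℂ, (w : OnePoint ℂ) = p i :=
    ne_infty_iff_exists.mp (h₀ ▸ hp.ne hi)
  obtain ⟨x, hx⟩ := hfin 3 (by decide)
  obtain ⟨y, hy⟩ := hfin 4 (by decide)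
  obtain ⟨z, hz⟩ := hfin 5 (by decide)
  obtain ⟨u, hu⟩ := hfin 6 (by decide)
  obtain ⟨v, hv⟩ := hfin 7 (by decide)
  refine ⟨x, y, z, u, v, funext fun i => ?_⟩
  fin_cases i <;> simp [normalizedConfig, *]

theorem isSolution_normalizedConfig_iff {a : Fin 5 → ℂ} {x y z u v : ℂ} :
    IsSolution a (normalizedConfig x y z u v) ↔ Function.Injective ![0, 1, x, y, z, u, v] ∧
      y = a 0 ∧ z = a 1 * x ∧ v = a 2 * u ∧
      (y - 1) * (u - x) = a 3 * ((y - x) * (u - 1)) ∧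
      (z - 1) * (v - x) = a 4 * ((z - x) * (v - 1)) := by
  have hcons : normalizedConfig x y z u v = Fin.cons ∞ ((↑) ∘ ![0, 1, x, y, z, u, v]) := by
    ext i; fin_cases i <;> rfl
  unfold IsSolution
  rw [hcons, OnePoint.injective_cons_infty_iff, ← hcons]
  refine and_congr_right fun hw => ?_
  have hx₀ : x ≠ 0 := hw.ne (by decide : (2 : Fin 7) ≠ 0)
  have hu₀ : u ≠ 0 := hw.ne (by decide : (5 : Fin 7) ≠ 0)
  have hyx : y ≠ x := hw.ne (by decide : (3 : Fin 7) ≠ 2)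
  have hu₁ : u ≠ 1 := hw.ne (by decide : (5 : Fin 7) ≠ 1)
  have hzx : z ≠ x := hw.ne (by decide : (4 : Fin 7) ≠ 2)
  have hv₁ : v ≠ 1 := hw.ne (by decide : (6 : Fin 7) ≠ 1)
  simp only [normalizedConfig, Matrix.cons_val, true_and]
  rw [CR_infty_coe_eq_iff one_ne_zero, CR_infty_coe_eq_iff hx₀, CR_infty_coe_eq_iff hu₀,
    CR_coe_eq_iff hyx hu₁, CR_coe_eq_iff hzx hv₁]
  simp only [sub_zero, mul_one]

noncomputable def config (a : Fin 5 → ℂ) (x : ℂ) : Fin 8 → OnePoint ℂ :=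
  normalizedConfig x (a 0) (a 1 * x) (uNum a x / uDen a x) (a 2 * (uNum a x / uDen a x))

theorem config_injective (a : Fin 5 → ℂ) : Function.Injective (config a) :=
  fun _ _ h => OnePoint.coe_injective (congrFun h 3)

theorem setOf_isSolution_eq_image {a : Fin 5 → ℂ} (ha : ∀ i, a i ≠ 0 ∧ a i ≠ 1)
    (hgen : genericity a ≠ 0) :
    {p | IsSolution a p} = config a '' {x | (eliminationCubic a).toPoly.eval x = 0} := by
  ext p
  constructor
  · intro hp
    obtain ⟨x, y, z, u, v, rfl⟩ := exists_eq_normalizedConfig hp.1 hp.2.1 hp.2.2.1 hp.2.2.2.1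
    obtain ⟨hw, rfl, rfl, rfl, h₄, h₅⟩ := isSolution_normalizedConfig_iff.mp hp
    have hu := mul_uDen_eq_uNum_iff.mp h₄
    have hx₁ : x ≠ 1 := hw.ne (by decide : (2 : Fin 7) ≠ 1)
    have hD := uDen_ne_zero (ha 0).2 hx₁ hu
    refine ⟨x, (eval_eliminationCubic_eq_zero_iff hD hu).mp h₅, ?_⟩
    rw [config, ← eq_div_of_mul_eq hD hu]
  · rintro ⟨x, hx, rfl⟩
    have hD := (nondegenerate_of_genericity hgen hx).1
    have hu : uNum a x / uDen a x * uDen a x = uNum a x := div_mul_cancel₀ _ hD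
    exact isSolution_normalizedConfig_iff.mpr ⟨injective_of_genericity ha hgen hx hu, rfl, rfl,
      rfl, mul_uDen_eq_uNum_iff.mpr hu, (eval_eliminationCubic_eq_zero_iff hD hu).mpr hx⟩

theorem crossRatioDegree_eq_three_T2 :
    ∃ q : MvPolynomial (Fin 5) ℂ, q ≠ 0 ∧
      ∀ a : Fin 5 → ℂ, (∀ i, a i ≠ 0 ∧ a i ≠ 1) → MvPolynomial.eval a q ≠ 0 →
        let S : Set (Fin 8 → OnePoint ℂ) :=
          {p | Function.Injective p ∧ p 0 = ∞ ∧ p 1 = ((0 : ℂ) : OnePoint ℂ) ∧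
            p 2 = ((1 : ℂ) : OnePoint ℂ) ∧
            CR (p 0) (p 1) (p 2) (p 4) = a 0 ∧
            CR (p 0) (p 1) (p 3) (p 5) = a 1 ∧
            CR (p 0) (p 1) (p 6) (p 7) = a 2 ∧
            CR (p 2) (p 3) (p 4) (p 6) = a 3 ∧
            CR (p 2) (p 3) (p 5) (p 7) = a 4}
        S.Finite ∧ S.ncard = 3 := by
  refine ⟨genericity MvPolynomial.X, genericity_X_ne_zero, fun a ha hq => ?_⟩
  rw [eval_genericity_X] at hq
  have hroots : {x | (eliminationCubic a).toPoly.eval x = 0}.ncard = 3 :=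
    Cubic.ncard_setOf_eval_eq_zero (neg_ne_zero.mpr (mul_ne_zero (ha 1).1 (ha 3).1))
      (discr_ne_zero_of_genericity hq)
  show {p | IsSolution a p}.Finite ∧ {p | IsSolution a p}.ncard = 3
  rw [setOf_isSolution_eq_image ha hq, Set.ncard_image_of_injective _ (config_injective a)]
  exact ⟨(Set.finite_of_ncard_ne_zero (by omega)).image _, hroots⟩
end
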